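/- Let M > 0, R₀ > 0 and δ > 0. There is a constant C > 0, depending only on M and R₀, such that for every integer j ≥ 1, every x ∈ ℝ³ with x ≠ 0, |x| ≤ R₀ and |x₃| ≤ M(x₁² + x₂²), and every i ∈ {1,2}, the tangential components of the gradient of the difference of the point-source kernels satisfy |∂_{x_i}(Φ₀(x, x_j) − Φ₀(x, y_j))| = (1/4π)·| 1/|x−y_j|³ − 1/|x−x_j|³ |·|x_i| ≤ C/|x|. -/

import Mathlib

noncomputable section

open Real

/-- Euclidean space `ℝ³`. -/
abbrev E3 := EuclideanSpace ℝ (Fin 3)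

/-- The fundamental solution `Φ₀(x,y) = 1/(4π|x−y|)` of the Laplacian in `ℝ³`. -/
def Phi0 (x y : E3) : ℝ := 1 / (4 * Real.pi * ‖x - y‖)

/-- The exterior source points `x_j = (0,0,δ/j)`. -/
def xj (δ : ℝ) (j : ℕ) : E3 := EuclideanSpace.single (2 : Fin 3) (δ / j)

/-- The interior source points `y_j = (0,0,−δ/j)`. -/
def yj (δ : ℝ) (j : ℕ) : E3 := EuclideanSpace.single (2 : Fin 3) (-(δ / j))

/-!
Put `r = √(x₁² + x₂²)`, `h = δ/j`, `a = |x - y_j|` and `b = |x - x_j|`, so that both distances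
are at least `r`. Since `a` is also the distance from `(x₁, x₂, -x₃)` to `x_j`, the triangle
inequality gives `|a - b| ≤ 2|x₃| ≤ 2Mr²`, hence `|a⁻³ - b⁻³| ≤ 3|a - b|/r⁴ ≤ 6M/r²`, and with
`|x_i| ≤ r` the derivative is at most `6M/(4πr)`. Finally `|x₃| ≤ Mr² ≤ MR₀r` on the patch, so
`|x| ≤ r√(1 + M²R₀²)`.
-/

theorem hasFDerivAt_inv_norm_sub {F : Type*} [NormedAddCommGroup F] [InnerProductSpace ℝ F]
    {p x : F} (hx : x ≠ p) :
    HasFDerivAt (fun z => ‖z - p‖⁻¹) (-(‖x - p‖ ^ 3)⁻¹ • innerSL ℝ (x - p)) x := by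
  have hpos : 0 < ‖x - p‖ := norm_pos_iff.mpr (sub_ne_zero.mpr hx)
  have hnorm := (((hasFDerivAt_id x).sub_const p).norm_sq).sqrt (by simp [hpos.ne'])
  simp only [id, Real.sqrt_sq (norm_nonneg _)] at hnorm
  refine ((hasDerivAt_inv hpos.ne').comp_hasFDerivAt x hnorm).congr_fderiv ?_
  ext v
  simp only [ContinuousLinearMap.comp_id, neg_smul, neg_apply, smul_apply, coe_innerSL_apply,
    nsmul_eq_mul, Nat.cast_ofNat, smul_eq_mul, neg_inj]
  field_simp

theorem sub_le_abs_add_of_sq_eq {a b s u v : ℝ} (hb : 0 ≤ b) (hs : 0 ≤ s) (ha2 : a ^ 2 = s + u ^ 2)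
    (hb2 : b ^ 2 = s + v ^ 2) : a - b ≤ |u + v| := by
  have hvb : |v| ≤ b := abs_le_of_sq_le_sq' (by rw [sq_abs]; linarith) hb |>.2
  have hcross : -((u + v) * v) ≤ |u + v| * b := by
    calc -((u + v) * v) ≤ |u + v| * |v| := by rw [← abs_mul]; exact neg_le_abs _
      _ ≤ |u + v| * b := by gcongr
  have hsq : a ^ 2 ≤ (b + |u + v|) ^ 2 := by nlinarith [sq_abs (u + v)]
  linarith [(abs_le_of_sq_le_sq' hsq (by positivity)).2]

theorem abs_sub_le_abs_add_of_sq_eq {a b s u v : ℝ} (ha : 0 ≤ a) (hb : 0 ≤ b) (hs : 0 ≤ s)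
    (ha2 : a ^ 2 = s + u ^ 2) (hb2 : b ^ 2 = s + v ^ 2) : |a - b| ≤ |u + v| :=
  abs_sub_le_iff.mpr ⟨sub_le_abs_add_of_sq_eq hb hs ha2 hb2,
    add_comm u v ▸ sub_le_abs_add_of_sq_eq ha hs hb2 ha2⟩

theorem abs_one_div_pow_three_sub_le {r a b : ℝ} (hr : 0 < r) (ha : r ≤ a) (hb : r ≤ b) :
    |1 / a ^ 3 - 1 / b ^ 3| ≤ 3 * |a - b| / r ^ 4 := by
  have ha0 : 0 < a := hr.trans_le ha
  have hb0 : 0 < b := hr.trans_le hb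
  have hsplit : 1 / a ^ 3 - 1 / b ^ 3
      = (b - a) * (1 / (a * b ^ 3) + 1 / (a ^ 2 * b ^ 2) + 1 / (a ^ 3 * b)) := by
    field_simp; ring
  have h1 : 1 / (a * b ^ 3) ≤ 1 / r ^ 4 := by rw [show r ^ 4 = r * r ^ 3 by ring]; gcongr
  have h2 : 1 / (a ^ 2 * b ^ 2) ≤ 1 / r ^ 4 := by rw [show r ^ 4 = r ^ 2 * r ^ 2 by ring]; gcongr
  have h3 : 1 / (a ^ 3 * b) ≤ 1 / r ^ 4 := by rw [show r ^ 4 = r ^ 3 * r by ring]; gcongr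
  calc |1 / a ^ 3 - 1 / b ^ 3|
      = |a - b| * (1 / (a * b ^ 3) + 1 / (a ^ 2 * b ^ 2) + 1 / (a ^ 3 * b)) := by
        rw [hsplit, abs_mul, abs_sub_comm, abs_of_pos (by positivity : 0 < 1 / (a * b ^ 3) + _ + _)]
    _ ≤ |a - b| * (1 / r ^ 4 + 1 / r ^ 4 + 1 / r ^ 4) := by gcongr
    _ = 3 * |a - b| / r ^ 4 := by ring

def cylRadius (x : E3) : ℝ := √(x 0 ^ 2 + x 1 ^ 2)

theorem cylRadius_nonneg (x : E3) : 0 ≤ cylRadius x := Real.sqrt_nonneg _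

theorem cylRadius_sq (x : E3) : cylRadius x ^ 2 = x 0 ^ 2 + x 1 ^ 2 :=
  Real.sq_sqrt (by positivity)

theorem abs_apply_le_cylRadius (x : E3) {i : Fin 3} (hi : i ≠ 2) : |x i| ≤ cylRadius x :=
  Real.abs_le_sqrt (by fin_cases i <;> simp_all [sq_nonneg])

theorem norm_sub_single_two_sq (x : E3) (c : ℝ) :
    ‖x - EuclideanSpace.single 2 c‖ ^ 2 = cylRadius x ^ 2 + (x 2 - c) ^ 2 := by
  simp [EuclideanSpace.norm_sq_eq, Fin.sum_univ_three, cylRadius_sq]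

theorem norm_sq_eq_cylRadius_sq_add (x : E3) : ‖x‖ ^ 2 = cylRadius x ^ 2 + x 2 ^ 2 := by
  simp [EuclideanSpace.norm_sq_eq, Fin.sum_univ_three, cylRadius_sq]

theorem cylRadius_le_norm_sub_single_two (x : E3) (c : ℝ) :
    cylRadius x ≤ ‖x - EuclideanSpace.single 2 c‖ :=
  (pow_le_pow_iff_left₀ (cylRadius_nonneg x) (norm_nonneg _) two_ne_zero).mp
    (by rw [norm_sub_single_two_sq]; nlinarith [sq_nonneg (x 2 - c)])

theorem cylRadius_pos {M : ℝ} {x : E3} (hx : x ≠ 0) (hxM : |x 2| ≤ M * cylRadius x ^ 2) :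
    0 < cylRadius x := by
  refine (cylRadius_nonneg x).lt_of_ne fun h => hx ?_
  have hx2 : x 2 = 0 := abs_nonpos_iff.mp (by simpa [← h] using hxM)
  simpa [← h, hx2] using norm_sq_eq_cylRadius_sq_add x

theorem norm_le_cylRadius_mul_sqrt {M R : ℝ} {x : E3} (hxR : ‖x‖ ≤ R)
    (hxM : |x 2| ≤ M * cylRadius x ^ 2) :
    ‖x‖ ≤ cylRadius x * √(1 + M ^ 2 * R ^ 2) := by
  have hrR : cylRadius x ^ 2 ≤ R ^ 2 := by
    nlinarith [norm_sq_eq_cylRadius_sq_add x, norm_nonneg x, sq_nonneg (x 2)]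
  have hx2 : x 2 ^ 2 ≤ (M * cylRadius x ^ 2) ^ 2 := by
    rw [← sq_abs]; exact pow_le_pow_left₀ (abs_nonneg _) hxM 2
  rw [← Real.sqrt_sq (cylRadius_nonneg x), ← Real.sqrt_mul (sq_nonneg _)]
  refine Real.le_sqrt_of_sq_le ?_
  rw [norm_sq_eq_cylRadius_sq_add]
  nlinarith [mul_le_mul_of_nonneg_left hrR (by positivity : 0 ≤ M ^ 2 * cylRadius x ^ 2)]

theorem abs_one_div_norm_cube_sub_le (x : E3) (c : ℝ) (hr : 0 < cylRadius x) :
    |1 / ‖x - EuclideanSpace.single 2 (-c)‖ ^ 3 - 1 / ‖x - EuclideanSpace.single 2 c‖ ^ 3|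
      ≤ 6 * |x 2| / cylRadius x ^ 4 := by
  have hdiff := abs_sub_le_abs_add_of_sq_eq (norm_nonneg _) (norm_nonneg _) (sq_nonneg _)
    (norm_sub_single_two_sq x (-c)) (norm_sub_single_two_sq x c)
  rw [show x 2 - -c + (x 2 - c) = 2 * x 2 by ring, abs_mul, abs_two] at hdiff
  calc _ ≤ 3 * |‖x - EuclideanSpace.single 2 (-c)‖ - ‖x - EuclideanSpace.single 2 c‖|
        / cylRadius x ^ 4 :=
      abs_one_div_pow_three_sub_le hr (cylRadius_le_norm_sub_single_two x _)
        (cylRadius_le_norm_sub_single_two x _)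
    _ ≤ 3 * (2 * |x 2|) / cylRadius x ^ 4 := by gcongr
    _ = 6 * |x 2| / cylRadius x ^ 4 := by ring

theorem fderiv_Phi0_sub_Phi0_apply {p q x : E3} (hp : x ≠ p) (hq : x ≠ q) (v : E3) :
    fderiv ℝ (fun z => Phi0 z p - Phi0 z q) x v
      = (4 * π)⁻¹ * (inner ℝ (x - q) v / ‖x - q‖ ^ 3 - inner ℝ (x - p) v / ‖x - p‖ ^ 3) := by
  have hPhi : (fun z => Phi0 z p - Phi0 z q)
      = fun z => (4 * π)⁻¹ * ‖z - p‖⁻¹ - (4 * π)⁻¹ * ‖z - q‖⁻¹ := by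
    funext z; simp only [Phi0]; field_simp
  have h := ((hasFDerivAt_inv_norm_sub hp).const_mul (4 * π)⁻¹).fun_sub
    ((hasFDerivAt_inv_norm_sub hq).const_mul (4 * π)⁻¹)
  rw [hPhi, h.fderiv]
  simp only [sub_apply, smul_apply, innerSL_apply_apply, smul_eq_mul]
  ring

theorem inner_sub_single_two_single (x : E3) (c : ℝ) {i : Fin 3} (hi : i ≠ 2) :
    inner ℝ (x - EuclideanSpace.single 2 c) (EuclideanSpace.single i 1) = x i := by
  simp [EuclideanSpace.inner_single_right, hi]

theorem fderiv_Phi0_single_two_sub_apply {x : E3} (hr : 0 < cylRadius x) (c : ℝ) {i : Fin 3}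
    (hi : i ≠ 2) :
    fderiv ℝ (fun z => Phi0 z (EuclideanSpace.single 2 c) - Phi0 z (EuclideanSpace.single 2 (-c)))
        x (EuclideanSpace.single i 1)
      = 1 / (4 * π) * (1 / ‖x - EuclideanSpace.single 2 (-c)‖ ^ 3
          - 1 / ‖x - EuclideanSpace.single 2 c‖ ^ 3) * x i := by
  have hne (c' : ℝ) : x ≠ EuclideanSpace.single 2 c' := fun h => by
    simpa [h] using hr.trans_le (cylRadius_le_norm_sub_single_two x c')
  rw [fderiv_Phi0_sub_Phi0_apply (hne _) (hne _), inner_sub_single_two_single x _ hi,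
    inner_sub_single_two_single x _ hi]
  ring

theorem tangential_derivative_difference_bound (M R₀ : ℝ) (hM : 0 < M) :
    ∃ C > 0, ∀ δ : ℝ, 0 < δ → ∀ j : ℕ, 1 ≤ j → ∀ x : E3, x ≠ 0 → ‖x‖ ≤ R₀ →
      |x 2| ≤ M * ((x 0) ^ 2 + (x 1) ^ 2) → ∀ i : Fin 3, i ≠ 2 →
      (|fderiv ℝ (fun z => Phi0 z (xj δ j) - Phi0 z (yj δ j)) x (EuclideanSpace.single i 1)|
          = (1 / (4 * Real.pi)) *
            |1 / ‖x - yj δ j‖ ^ 3 - 1 / ‖x - xj δ j‖ ^ 3| * |x i| ∧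
        |fderiv ℝ (fun z => Phi0 z (xj δ j) - Phi0 z (yj δ j)) x (EuclideanSpace.single i 1)|
          ≤ C / ‖x‖) := by
  refine ⟨6 * M * √(1 + M ^ 2 * R₀ ^ 2) / (4 * π), by positivity, ?_⟩
  intro δ _ j _ x hx0 hxR hxM i hi
  rw [← cylRadius_sq] at hxM
  have hr := cylRadius_pos hx0 hxM
  have hD : |fderiv ℝ (fun z => Phi0 z (xj δ j) - Phi0 z (yj δ j)) x (EuclideanSpace.single i 1)|
      = 1 / (4 * π) * |1 / ‖x - yj δ j‖ ^ 3 - 1 / ‖x - xj δ j‖ ^ 3| * |x i| := by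
    rw [xj, yj, fderiv_Phi0_single_two_sub_apply hr _ hi, abs_mul, abs_mul,
      abs_of_pos (by positivity : 0 < 1 / (4 * π))]
  refine ⟨hD, hD ▸ ?_⟩
  calc 1 / (4 * π) * |1 / ‖x - yj δ j‖ ^ 3 - 1 / ‖x - xj δ j‖ ^ 3| * |x i|
      ≤ 1 / (4 * π) * (6 * |x 2| / cylRadius x ^ 4) * cylRadius x := by
        gcongr
        exacts [abs_one_div_norm_cube_sub_le x _ hr, abs_apply_le_cylRadius x hi]
    _ ≤ 1 / (4 * π) * (6 * (M * cylRadius x ^ 2) / cylRadius x ^ 4) * cylRadius x := by gcongr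
    _ = 6 * M / (4 * π) / cylRadius x := by field_simp
    _ ≤ 6 * M * √(1 + M ^ 2 * R₀ ^ 2) / (4 * π) / ‖x‖ := by
        rw [div_le_div_iff₀ hr (norm_pos_iff.mpr hx0)]
        calc 6 * M / (4 * π) * ‖x‖
            ≤ 6 * M / (4 * π) * (cylRadius x * √(1 + M ^ 2 * R₀ ^ 2)) := by
              gcongr; exact norm_le_cylRadius_mul_sqrt hxR hxM
          _ = 6 * M * √(1 + M ^ 2 * R₀ ^ 2) / (4 * π) * cylRadius x := by ring
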